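/- Let H : ℂ → ℂ be given by H(h) = −(1/27)·(h−4)³/h² (with the junk value H(0) = 0 coming from division by zero). For every n ≥ 1 and every c ∈ ℂ with c ≠ 0 and c ≠ 1, the set {z ∈ ℂ : H^[k](z) ≠ 0 for all 0 ≤ k < n, and H^[n](z) = c} has exactly 3ⁿ elements. -/

import Mathlib

/-- The hessian dynamical system in the coordinate `h = j/(2⁶·3³)`; note the
junk value `Hdyn 0 = 0` coming from Lean's division by zero. -/
noncomputable def Hdyn (h : ℂ) : ℂ := -(1 / 27) * (h - 4) ^ 3 / h ^ 2

/-!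
For `w ≠ 0` the fiber `Hdyn ⁻¹' {w}` is the zero set of the cubic `(z - 4)³ + 27 w z²`, which is
separable unless `w` is one of the critical values `0`, `1`; so these fibers have three points.
Both `0` and `1` are fixed by `Hdyn`. Hence for `c ∉ {0, 1}` the condition that the orbit avoids
the pole is automatic, and no point of `Hdyn^[n] ⁻¹' {c}` is `0` or `1`, so passing from
`n` to `n + 1` multiplies the count by three.
-/

open Polynomial Function

theorem Set.Finite.ncard_preimage_of_forall_ncard_fiber {α β : Type*} {f : α → β} {t : Set β}
    (ht : t.Finite) {k : ℕ} (hfin : ∀ b ∈ t, (f ⁻¹' {b}).Finite)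
    (hk : ∀ b ∈ t, (f ⁻¹' {b}).ncard = k) : (f ⁻¹' t).ncard = k * t.ncard := by
  rw [← Set.biUnion_preimage_singleton, ht.ncard_biUnion hfin (Set.pairwiseDisjoint_fiber f t),
    finsum_mem_congr rfl hk, ← finsum_one, mul_finsum_mem, mul_one]

theorem Function.IsFixedPt.iterate_eq_of_le {α : Type*} {f : α → α} {a z : α} {k n : ℕ}
    (ha : IsFixedPt f a) (hk : f^[k] z = a) (hkn : k ≤ n) : f^[n] z = a := by
  obtain ⟨m, rfl⟩ := Nat.exists_eq_add_of_le hkn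
  rw [add_comm, iterate_add_apply, hk, (ha.iterate m).eq]

theorem Function.IsFixedPt.setOf_forall_iterate_ne_and_eq {α : Type*} {f : α → α} {a c : α}
    (ha : IsFixedPt f a) (hc : c ≠ a) (n : ℕ) :
    {z | (∀ k, k < n → f^[k] z ≠ a) ∧ f^[n] z = c} = f^[n] ⁻¹' {c} := by
  ext z
  refine ⟨And.right, fun hz => ⟨fun k hkn hk => hc ?_, hz⟩⟩
  rw [← hz, ha.iterate_eq_of_le hk hkn.le]

noncomputable def hessianFiberPoly (w : ℂ) : ℂ[X] := (X - C 4) ^ 3 + C (27 * w) * X ^ 2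

theorem hessianFiberPoly_natDegree (w : ℂ) : (hessianFiberPoly w).natDegree = 3 := by
  unfold hessianFiberPoly; compute_degree!

theorem eval_hessianFiberPoly (w z : ℂ) :
    (hessianFiberPoly w).eval z = (z - 4) ^ 3 + 27 * w * z ^ 2 := by
  simp [hessianFiberPoly]

theorem eval_derivative_hessianFiberPoly (w z : ℂ) :
    (derivative (hessianFiberPoly w)).eval z = 3 * (z - 4) ^ 2 + 54 * w * z := by
  simp only [hessianFiberPoly, derivative_add, derivative_X_sub_C_pow, derivative_C_mul_X_pow,
    eval_add, eval_mul, eval_C, eval_pow, eval_sub, eval_X]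
  push_cast
  ring

theorem hessianFiberPoly_separable {w : ℂ} (hw0 : w ≠ 0) (hw1 : w ≠ 1) :
    (hessianFiberPoly w).Separable := by
  rw [Separable, isCoprime_iff_aeval_ne_zero_of_isAlgClosed (k := ℂ) ℂ]
  intro z
  by_contra! ⟨hP, hP'⟩
  simp only [coe_aeval_eq_eval, eval_hessianFiberPoly, eval_derivative_hessianFiberPoly] at hP hP'
  -- `4` and `-8` are the critical points of `Hdyn`, with critical values `0` and `1`.
  have : (z - 4) ^ 2 * (z + 8) = 0 := by linear_combination z * hP' - 2 * hP
  rcases mul_eq_zero.mp this with h4 | h8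
  · obtain rfl : z = 4 := by simpa [sub_eq_zero] using h4
    exact hw0 (by linear_combination hP / 432)
  · obtain rfl : z = -8 := by linear_combination h8
    exact hw1 (by linear_combination hP / 1728)

theorem Hdyn_eq_iff_eval_hessianFiberPoly_eq_zero {w z : ℂ} (hw : w ≠ 0) :
    Hdyn z = w ↔ (hessianFiberPoly w).eval z = 0 := by
  rw [eval_hessianFiberPoly]
  rcases eq_or_ne z 0 with rfl | hz
  · simp [Hdyn, hw.symm]
  · rw [Hdyn]
    field_simp
    constructor <;> intro h <;> linear_combination -h

theorem preimage_Hdyn_singleton {w : ℂ} (hw : w ≠ 0) :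
    Hdyn ⁻¹' {w} = (hessianFiberPoly w).rootSet ℂ := by
  ext z
  have hP : hessianFiberPoly w ≠ 0 := by
    intro h; simpa [h] using hessianFiberPoly_natDegree w
  simp [mem_rootSet, hP, Hdyn_eq_iff_eval_hessianFiberPoly_eq_zero hw]

theorem ncard_preimage_Hdyn_singleton {w : ℂ} (hw0 : w ≠ 0) (hw1 : w ≠ 1) :
    (Hdyn ⁻¹' {w}).ncard = 3 := by
  rw [preimage_Hdyn_singleton hw0, ← Nat.card_coe_set_eq, Nat.card_eq_fintype_card,
    card_rootSet_eq_natDegree (hessianFiberPoly_separable hw0 hw1) (IsAlgClosed.splits _),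
    hessianFiberPoly_natDegree]

theorem isFixedPt_Hdyn_zero : IsFixedPt Hdyn 0 := by simp [IsFixedPt, Hdyn]

theorem isFixedPt_Hdyn_one : IsFixedPt Hdyn 1 := by norm_num [IsFixedPt, Hdyn]

theorem ncard_preimage_iterate_Hdyn_singleton {c : ℂ} (hc0 : c ≠ 0) (hc1 : c ≠ 1) (n : ℕ) :
    (Hdyn^[n] ⁻¹' {c}).ncard = 3 ^ n := by
  induction n with
  | zero => simp
  | succ n ih =>
    have hfin : (Hdyn^[n] ⁻¹' {c}).Finite := Set.finite_of_ncard_ne_zero (by simp [ih])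
    have hne : ∀ w ∈ Hdyn^[n] ⁻¹' {c}, w ≠ 0 ∧ w ≠ 1 := by
      intro w hw
      refine ⟨?_, ?_⟩ <;> rintro rfl
      · exact hc0 (hw.symm.trans (isFixedPt_Hdyn_zero.iterate n).eq)
      · exact hc1 (hw.symm.trans (isFixedPt_Hdyn_one.iterate n).eq)
    rw [iterate_succ, Set.preimage_comp, pow_succ', ← ih]
    refine hfin.ncard_preimage_of_forall_ncard_fiber (fun w hw => ?_) (fun w hw => ?_)
    · rw [preimage_Hdyn_singleton (hne w hw).1]; exact Set.toFinite _
    · exact ncard_preimage_Hdyn_singleton (hne w hw).1 (hne w hw).2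

theorem generic_fiber_of_iterate_has_three_pow_points_general (n : ℕ)
    (c : ℂ) (hc0 : c ≠ 0) (hc1 : c ≠ 1) :
    {z : ℂ | (∀ k, k < n → Hdyn^[k] z ≠ 0) ∧ Hdyn^[n] z = c}.ncard = 3 ^ n := by
  rw [isFixedPt_Hdyn_zero.setOf_forall_iterate_ne_and_eq hc0]
  exact ncard_preimage_iterate_Hdyn_singleton hc0 hc1 n

theorem generic_fiber_of_iterate_has_three_pow_points (n : ℕ) (hn : 1 ≤ n)
    (c : ℂ) (hc0 : c ≠ 0) (hc1 : c ≠ 1) :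
    {z : ℂ | (∀ k, k < n → Hdyn^[k] z ≠ 0) ∧ Hdyn^[n] z = c}.ncard = 3 ^ n :=
  generic_fiber_of_iterate_has_three_pow_points_general n c hc0 hc1
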